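/- arXiv:2001.04323 — 2 statements merged into one kernel-verified Lean document; each statement's English description precedes it below -/
import Mathlib

section
/- Let b, d : [0,∞) → [0,∞) and A : [0,∞) → ℝ be continuous with A(x) ≥ A̲ for all x and some constant A̲ > 0. Define 𝒜(x) := ∫₀ˣ 1/A(x') dx', f(x,λ) := (b(x)/A(x))·exp(∫₀ˣ (λ − d(x'))/A(x') dx'), and F(λ) := ∫₀^∞ f(x,λ) dx. Suppose F(λ̄) < ∞ for some λ̄ ∈ ℝ. Then for every λ < λ̄, F is twice differentiable at λ with F'(λ) = ∫₀^∞ 𝒜(x)·f(x,λ) dx and F''(λ) = ∫₀^∞ 𝒜(x)²·f(x,λ) dx, and the log-convexity inequality F'(λ)² ≤ F(λ)·F''(λ) holds, i.e. (∂_λF)² − F·∂²_λF ≤ 0. -/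
/-!
Splitting the exponent gives `f(x, λ) = f(x, λ̄) · exp ((λ - λ̄) 𝒜(x))` for `x ≥ 0`, so `F` is a
Laplace-type transform of the integrable weight `f(·, λ̄)` in the nonnegative variable `𝒜`. For
`λ < λ̄` the factors `𝒜 ^ k · exp ((λ - λ̄) 𝒜)` are bounded uniformly near `λ`, so one may
differentiate under the integral sign as often as needed. The inequality `F'² ≤ F F''` is the
Cauchy–Schwarz inequality for the measure `f(x, λ) dx`, read off from the nonnegative quadratic
`t ↦ ∫ (t + 𝒜)² f(·, λ)`.
-/

open MeasureTheory Set Real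
open scoped Nat Topology

theorem pow_mul_exp_neg_le_factorial_div_pow (k : ℕ) {t δ : ℝ} (ht : 0 ≤ t) (hδ : 0 < δ) :
    t ^ k * exp (-(δ * t)) ≤ k ! / δ ^ k := by
  have h := pow_div_factorial_le_exp _ (mul_nonneg hδ.le ht) k
  rw [mul_pow, div_le_iff₀ (by positivity)] at h
  rw [exp_neg, ← div_eq_mul_inv, div_le_div_iff₀ (exp_pos _) (by positivity)]
  linarith

theorem norm_pow_mul_mul_exp_le (k : ℕ) {t y s δ : ℝ} (ht : 0 ≤ t) (hδ : 0 < δ) (hs : s ≤ -δ) :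
    ‖t ^ k * (y * exp (s * t))‖ ≤ k ! / δ ^ k * ‖y‖ := by
  rw [norm_mul, norm_mul, norm_pow, Real.norm_of_nonneg ht, Real.norm_of_nonneg (exp_pos _).le]
  calc t ^ k * (‖y‖ * exp (s * t)) ≤ t ^ k * (‖y‖ * exp (-(δ * t))) := by
        gcongr; nlinarith
    _ = t ^ k * exp (-(δ * t)) * ‖y‖ := by ring
    _ ≤ k ! / δ ^ k * ‖y‖ := by gcongr; exact pow_mul_exp_neg_le_factorial_div_pow k ht hδ

section ExponentialTilt

variable {α : Type*} [MeasurableSpace α] {μ : Measure α} {a g : α → ℝ}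

theorem integrable_pow_mul_mul_exp (ha : AEStronglyMeasurable a μ) (ha0 : ∀ᵐ x ∂μ, 0 ≤ a x)
    (hg : Integrable g μ) {s : ℝ} (hs : s < 0) (k : ℕ) :
    Integrable (fun x => a x ^ k * (g x * exp (s * a x))) μ := by
  refine (hg.norm.const_mul (k ! / (-s) ^ k)).mono' (by fun_prop) ?_
  filter_upwards [ha0] with x hx
  exact norm_pow_mul_mul_exp_le k hx (neg_pos.2 hs) (neg_neg s).ge

theorem hasDerivAt_integral_pow_mul_mul_exp (ha : AEStronglyMeasurable a μ)
    (ha0 : ∀ᵐ x ∂μ, 0 ≤ a x) (hg : Integrable g μ) {s : ℝ} (hs : s < 0) (k : ℕ) :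
    HasDerivAt (fun s => ∫ x, a x ^ k * (g x * exp (s * a x)) ∂μ)
      (∫ x, a x ^ (k + 1) * (g x * exp (s * a x)) ∂μ) s := by
  have hδ : 0 < -s / 2 := by linarith
  refine (hasDerivAt_integral_of_dominated_loc_of_deriv_le
    (F := fun s x => a x ^ k * (g x * exp (s * a x)))
    (F' := fun s x => a x ^ (k + 1) * (g x * exp (s * a x))) (Metric.ball_mem_nhds s hδ)
    (.of_forall fun _ => by fun_prop) (integrable_pow_mul_mul_exp ha ha0 hg hs k) (by fun_prop)
    ?_ (hg.norm.const_mul ((k + 1) ! / (-s / 2) ^ (k + 1))) ?_).2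
  · filter_upwards [ha0] with x hx s' hs'
    rw [Real.ball_eq_Ioo] at hs'
    exact norm_pow_mul_mul_exp_le (k + 1) hx hδ (by linarith [hs'.2])
  · filter_upwards with x s' _
    exact (((hasDerivAt_mul_const (a x)).exp.const_mul (g x)).const_mul (a x ^ k)).congr_deriv
      (by ring)

theorem sq_integral_mul_le_integral_mul_integral_sq_mul {w : α → ℝ} (hw0 : 0 ≤ᵐ[μ] w)
    (h0 : Integrable w μ)
    (h1 : Integrable (fun x => a x * w x) μ) (h2 : Integrable (fun x => a x ^ 2 * w x) μ) :
    (∫ x, a x * w x ∂μ) ^ 2 ≤ (∫ x, w x ∂μ) * ∫ x, a x ^ 2 * w x ∂μ := by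
  have hquad : ∀ t : ℝ, 0 ≤ (∫ x, w x ∂μ) * (t * t) + (2 * ∫ x, a x * w x ∂μ) * t
      + ∫ x, a x ^ 2 * w x ∂μ := by
    intro t
    have hsq : ∫ x, (t + a x) ^ 2 * w x ∂μ = (∫ x, w x ∂μ) * (t * t)
        + (2 * ∫ x, a x * w x ∂μ) * t + ∫ x, a x ^ 2 * w x ∂μ := by
      have hexp : (fun x => (t + a x) ^ 2 * w x)
          = fun x => (t * t) * w x + ((2 * t) * (a x * w x) + a x ^ 2 * w x) := by
        funext x; ring
      rw [hexp, integral_add (h0.const_mul _)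
          (g := fun x => 2 * t * (a x * w x) + a x ^ 2 * w x) ((h1.const_mul _).add h2),
        integral_add (h1.const_mul _) h2, integral_const_mul, integral_const_mul]
      ring
    rw [← hsq]
    exact integral_nonneg_of_ae (hw0.mono fun x hx => mul_nonneg (sq_nonneg _) hx)
  have h := discrim_le_zero hquad
  rw [discrim] at h
  linarith

variable {f : α → ℝ → ℝ} {c : ℝ}

theorem integral_pow_mul_eq_of_tilt
    (hf : ∀ u, (f · u) =ᵐ[μ] fun x => f x c * exp ((u - c) * a x)) (k : ℕ) (u : ℝ) :
    ∫ x, a x ^ k * f x u ∂μ = ∫ x, a x ^ k * (f x c * exp ((u - c) * a x)) ∂μ :=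
  integral_congr_ae ((hf u).mono fun _ hx => congrArg _ hx)

theorem integrable_pow_mul_of_tilt (ha : AEStronglyMeasurable a μ) (ha0 : ∀ᵐ x ∂μ, 0 ≤ a x)
    (hf : ∀ u, (f · u) =ᵐ[μ] fun x => f x c * exp ((u - c) * a x))
    (hfc : Integrable (f · c) μ) {l : ℝ} (hl : l < c) (k : ℕ) :
    Integrable (fun x => a x ^ k * f x l) μ :=
  (integrable_pow_mul_mul_exp ha ha0 hfc (sub_neg.2 hl) k).congr
    ((hf l).mono fun _ hx => congrArg _ hx.symm)

theorem hasDerivAt_integral_pow_mul_of_tilt (ha : AEStronglyMeasurable a μ)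
    (ha0 : ∀ᵐ x ∂μ, 0 ≤ a x) (hf : ∀ u, (f · u) =ᵐ[μ] fun x => f x c * exp ((u - c) * a x))
    (hfc : Integrable (f · c) μ) {l : ℝ} (hl : l < c) (k : ℕ) :
    HasDerivAt (fun u => ∫ x, a x ^ k * f x u ∂μ) (∫ x, a x ^ (k + 1) * f x l ∂μ) l := by
  simp only [integral_pow_mul_eq_of_tilt hf]
  exact (hasDerivAt_integral_pow_mul_mul_exp ha ha0 hfc (sub_neg.2 hl) k).comp_sub_const l c

theorem log_convex_integral_of_tilt (ha : AEStronglyMeasurable a μ) (ha0 : ∀ᵐ x ∂μ, 0 ≤ a x)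
    (hf : ∀ u, (f · u) =ᵐ[μ] fun x => f x c * exp ((u - c) * a x))
    (hfc : Integrable (f · c) μ) {l : ℝ} (hl : l < c) (hfl : 0 ≤ᵐ[μ] (f · l)) :
    HasDerivAt (fun u => ∫ x, f x u ∂μ) (∫ x, a x * f x l ∂μ) l ∧
      HasDerivAt (deriv fun u => ∫ x, f x u ∂μ) (∫ x, a x ^ 2 * f x l ∂μ) l ∧
      (∫ x, a x * f x l ∂μ) ^ 2 ≤ (∫ x, f x l ∂μ) * ∫ x, a x ^ 2 * f x l ∂μ := by
  have hderiv : ∀ u < c, HasDerivAt (fun u => ∫ x, f x u ∂μ) (∫ x, a x * f x u ∂μ) u := by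
    intro u hu
    simpa using hasDerivAt_integral_pow_mul_of_tilt ha ha0 hf hfc hu 0
  refine ⟨hderiv l hl, ?_, ?_⟩
  · have h := hasDerivAt_integral_pow_mul_of_tilt ha ha0 hf hfc hl 1
    simp only [pow_one] at h
    exact h.congr_of_eventuallyEq <|
      Filter.eventually_of_mem (Iio_mem_nhds hl) fun u hu => (hderiv u hu).deriv
  · exact sq_integral_mul_le_integral_mul_integral_sq_mul hfl
      (by simpa using integrable_pow_mul_of_tilt ha ha0 hf hfc hl 0)
      (by simpa using integrable_pow_mul_of_tilt ha ha0 hf hfc hl 1)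
      (integrable_pow_mul_of_tilt ha ha0 hf hfc hl 2)

end ExponentialTilt

theorem continuousOn_primitive_Ici {g : ℝ → ℝ} {a : ℝ} (hg : ContinuousOn g (Ici a)) :
    ContinuousOn (fun x => ∫ t in a..x, g t) (Ici a) := by
  intro x hx
  have hIcc : Icc a (x + 1) ∈ 𝓝[Ici a] x := by
    rw [← Ici_inter_Iic]
    exact inter_mem_nhdsWithin _ (Iic_mem_nhds (lt_add_one x))
  have hax : a ≤ x + 1 := by linarith [mem_Ici.1 hx]
  have hprim := intervalIntegral.continuousOn_primitive_interval (μ := volume) (b := x + 1)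
    ((hg.mono (by rw [uIcc_of_le hax]; exact Icc_subset_Ici_self)).integrableOn_compact
      isCompact_uIcc)
  rw [uIcc_of_le hax] at hprim
  exact (hprim x ⟨hx, by linarith⟩).mono_of_mem_nhdsWithin hIcc

theorem integral_sub_div_eq {d A : ℝ → ℝ} {a b : ℝ}
    (hd : IntervalIntegrable (fun t => d t / A t) volume a b)
    (hA : IntervalIntegrable (fun t => 1 / A t) volume a b) (u c : ℝ) :
    ∫ t in a..b, (u - d t) / A t
      = (∫ t in a..b, (c - d t) / A t) + (u - c) * ∫ t in a..b, 1 / A t := by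
  have key : ∀ v, ∫ t in a..b, (v - d t) / A t
      = v * (∫ t in a..b, 1 / A t) - ∫ t in a..b, d t / A t := by
    intro v
    rw [← intervalIntegral.integral_const_mul, ← intervalIntegral.integral_sub (hA.const_mul v) hd]
    congr 1; funext t; ring
  rw [key u, key c]
  ring

theorem F_log_convex_general
    (b d A : ℝ → ℝ) (Abar : ℝ)
    (hd : ContinuousOn d (Ici 0))
    (hA : ContinuousOn A (Ici 0))
    (hbnn : ∀ x ≥ (0:ℝ), 0 ≤ b x)
    (hAbar : 0 < Abar) (hAge : ∀ x ≥ (0:ℝ), Abar ≤ A x)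
    (calA : ℝ → ℝ) (hcalA : ∀ x : ℝ, calA x = ∫ t in (0:ℝ)..x, 1 / A t)
    (f : ℝ → ℝ → ℝ)
    (hf : ∀ x l : ℝ, f x l = b x / A x * Real.exp (∫ t in (0:ℝ)..x, (l - d t) / A t))
    (F : ℝ → ℝ) (hF : ∀ l : ℝ, F l = ∫ x in Ioi (0:ℝ), f x l)
    (lamBar : ℝ) (hfin : IntegrableOn (fun x => f x lamBar) (Ioi 0)) :
    ∀ l < lamBar,
      HasDerivAt F (∫ x in Ioi (0:ℝ), calA x * f x l) l ∧
      HasDerivAt (deriv F) (∫ x in Ioi (0:ℝ), calA x ^ 2 * f x l) l ∧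
      (∫ x in Ioi (0:ℝ), calA x * f x l) ^ 2 ≤
        F l * ∫ x in Ioi (0:ℝ), calA x ^ 2 * f x l := by
  intro l hl
  obtain rfl : F = fun u => ∫ x in Ioi (0:ℝ), f x u := funext hF
  have hApos : ∀ x ≥ (0:ℝ), 0 < A x := fun x hx => hAbar.trans_le (hAge x hx)
  have hA0 : ∀ x ∈ Ici (0:ℝ), A x ≠ 0 := fun x hx => (hApos x hx).ne'
  have hinvA : ContinuousOn (fun t => 1 / A t) (Ici 0) := continuousOn_const.div hA hA0
  have hcalA_cont : ContinuousOn calA (Ici 0) := by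
    simpa only [← funext hcalA] using continuousOn_primitive_Ici hinvA
  have hcalA0 : ∀ x ≥ (0:ℝ), 0 ≤ calA x := fun x hx => (hcalA x).symm ▸
    intervalIntegral.integral_nonneg hx fun t ht => one_div_nonneg.2 (hApos t ht.1).le
  have hsplit : ∀ x ≥ (0:ℝ), ∀ u, f x u = f x lamBar * exp ((u - lamBar) * calA x) := by
    intro x hx u
    have hIcc : Icc 0 x ⊆ Ici 0 := Icc_subset_Ici_self
    rw [hf, hf, integral_sub_div_eq (((hd.div hA hA0).mono hIcc).intervalIntegrable_of_Icc hx)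
      ((hinvA.mono hIcc).intervalIntegrable_of_Icc hx) u lamBar, exp_add, hcalA]
    ring
  have hfl0 : ∀ x ≥ (0:ℝ), 0 ≤ f x l := fun x hx => (hf x l).symm ▸
    mul_nonneg (div_nonneg (hbnn x hx) (hApos x hx).le) (exp_pos _).le
  exact log_convex_integral_of_tilt
    ((hcalA_cont.mono Ioi_subset_Ici_self).aestronglyMeasurable measurableSet_Ioi)
    (ae_restrict_of_forall_mem measurableSet_Ioi fun x hx => hcalA0 x (le_of_lt hx))
    (fun u => ae_restrict_of_forall_mem measurableSet_Ioi fun x hx => hsplit x (le_of_lt hx) u)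
    hfin hl (ae_restrict_of_forall_mem measurableSet_Ioi fun x hx => hfl0 x (le_of_lt hx))

/-- differentiability of `F` under the integral sign and the
log-convexity inequality `(F')² ≤ F·F''`. -/
theorem F_log_convex
    (b d A : ℝ → ℝ) (Abar : ℝ)
    (hb : ContinuousOn b (Ici 0)) (hd : ContinuousOn d (Ici 0))
    (hA : ContinuousOn A (Ici 0))
    (hbnn : ∀ x ≥ (0:ℝ), 0 ≤ b x) (hdnn : ∀ x ≥ (0:ℝ), 0 ≤ d x)
    (hAbar : 0 < Abar) (hAge : ∀ x ≥ (0:ℝ), Abar ≤ A x)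
    (calA : ℝ → ℝ) (hcalA : ∀ x : ℝ, calA x = ∫ t in (0:ℝ)..x, 1 / A t)
    (f : ℝ → ℝ → ℝ)
    (hf : ∀ x l : ℝ, f x l = b x / A x * Real.exp (∫ t in (0:ℝ)..x, (l - d t) / A t))
    (F : ℝ → ℝ) (hF : ∀ l : ℝ, F l = ∫ x in Ioi (0:ℝ), f x l)
    (lamBar : ℝ) (hfin : IntegrableOn (fun x => f x lamBar) (Ioi 0)) :
    ∀ l < lamBar,
      HasDerivAt F (∫ x in Ioi (0:ℝ), calA x * f x l) l ∧
      HasDerivAt (deriv F) (∫ x in Ioi (0:ℝ), calA x ^ 2 * f x l) l ∧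
      (∫ x in Ioi (0:ℝ), calA x * f x l) ^ 2 ≤
        F l * ∫ x in Ioi (0:ℝ), calA x ^ 2 * f x l :=
  F_log_convex_general b d A Abar hd hA hbnn hAbar hAge calA hcalA f hf F hF lamBar hfin
end

section
/- Under the same hypotheses as the Canonical Equation (Λ : ℝⁿ × (0,∞) → ℝ C¹; M a probability density on ℝⁿ with ∫M(z)(1+|z|)e^{p·z}dz < ∞ for all p; U : [0,T] × ℝⁿ → ℝ C² solving ∂_tU(t,y) = −Λ(y, ∫M(z)e^{∇_yU(t,y)·z}dz); ȳ : [0,T] → ℝⁿ C¹ with ∇_yU(t,ȳ(t)) = 0 and D²_yU(t,ȳ(t)) invertible), define ρ(t) := ∂_tU(t, ȳ(t)). Then ρ(t) = −Λ(ȳ(t), 1) for all t ∈ [0,T]; moreover ρ is continuously differentiable with ρ'(t) = −∇_yΛ(ȳ(t),1) · [(D²_yU(t,ȳ(t)))⁻¹ · ∇_yΛ(ȳ(t),1)] − ∂_ηΛ(ȳ(t),1) · (∫M(z)·z dz) · ∇_yΛ(ȳ(t),1). In particular, if M is even (so ∫M(z)·z dz = 0) and D²_yU(t,ȳ(t)) is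 negative definite, then ρ'(t) ≥ 0. -/
/-!
Along the concentration curve `∇_y U (t, ȳ t) = 0`, so the Hamilton–Jacobi equation evaluated at
`ȳ t` only sees `∫ M = 1` and gives `ρ = -Λ (ȳ, 1)`. Differentiating `∇_y U (t, ȳ t) = 0` in `t`
gives `∂_t ∇_y U + D²_y U ȳ' = 0`; differentiating the Hamilton–Jacobi equation in `y` at `ȳ t`
(the moment generating function of `M` has gradient `∫ M z z` at `0`) gives
`∇_y ∂_t U = -∇_y Λ - ∂_η Λ • D²_y U ∫ M z z`. Equality of the mixed partials turns this into the
canonical equation `ȳ' = (D²_y U)⁻¹ ∇_y Λ + ∂_η Λ • ∫ M z z`, and `ρ' = -⟪∇_y Λ, ȳ'⟫` is the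
stated formula. Its sign follows from `⟪g, A⁻¹ g⟫ = ⟪A w, w⟫ ≤ 0` for `w = A⁻¹ g` when `A` is
negative definite.
-/

open MeasureTheory Set Real Function InnerProductSpace
open scoped RealInnerProductSpace

section MomentGeneratingFunction

variable {E : Type*} [NormedAddCommGroup E] [InnerProductSpace ℝ E] [FiniteDimensional ℝ E]

theorem exists_finset_exp_norm_le_sum_exp_inner :
    ∃ S : Finset E, ∀ z : E, exp ‖z‖ ≤ ∑ v ∈ S, exp ⟪v, z⟫ := by
  classical
  let b := stdOrthonormalBasis ℝ E
  let w : (Fin (Module.finrank ℝ E) → SignType) → E := fun σ => ∑ i, (σ i : ℝ) • b i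
  refine ⟨Finset.univ.image w, fun z => ?_⟩
  -- `‖z‖ ≤ ∑ i |⟪b i, z⟫|`, and the right side is `⟪w σ, z⟫` for `σ` the signs of the coordinates
  have hnorm : ‖z‖ ≤ ⟪w fun i => SignType.sign ⟪b i, z⟫, z⟫ := by
    calc ‖z‖ = ‖∑ i, ⟪b i, z⟫ • b i‖ := by rw [b.sum_repr']
      _ ≤ ∑ i, ‖⟪b i, z⟫ • b i‖ := norm_sum_le _ _
      _ = ⟪w fun i => SignType.sign ⟪b i, z⟫, z⟫ := by
        simp only [w, sum_inner, real_inner_smul_left, norm_smul, b.orthonormal.1, mul_one,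
          Real.norm_eq_abs, sign_mul_self]
  calc exp ‖z‖ ≤ exp ⟪w fun i => SignType.sign ⟪b i, z⟫, z⟫ := exp_le_exp.2 hnorm
    _ ≤ ∑ v ∈ Finset.univ.image w, exp ⟪v, z⟫ :=
      Finset.single_le_sum (f := fun v => exp ⟪v, z⟫) (fun v _ => (exp_pos _).le)
        (Finset.mem_image_of_mem w (Finset.mem_univ _))

variable [MeasurableSpace E] [BorelSpace E] {μ : Measure E}

theorem hasFDerivAt_integral_mul_exp_inner {M : E → ℝ}
    (hM : ∀ p : E, Integrable (fun z => M z * (1 + ‖z‖) * exp ⟪p, z⟫) μ) (p₀ : E) :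
    HasFDerivAt (fun p => ∫ z, M z * exp ⟪p, z⟫ ∂μ)
      (innerSL ℝ (∫ z, (M z * exp ⟪p₀, z⟫) • z ∂μ)) p₀ := by
  have hMmeas : AEStronglyMeasurable M μ := by
    have hcont : Continuous fun z : E => (1 + ‖z‖)⁻¹ :=
      Continuous.inv₀ (f := fun z : E => 1 + ‖z‖) (by fun_prop) fun z => by positivity
    refine ((hM 0).aestronglyMeasurable.mul hcont.aestronglyMeasurable).congr
      (ae_of_all _ fun z => ?_)
    have : (1 + ‖z‖) ≠ 0 := by positivity
    simp [field]
  have hmeas : ∀ p : E, AEStronglyMeasurable (fun z => M z * exp ⟪p, z⟫) μ := fun p =>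
    hMmeas.mul (continuous_exp.comp (continuous_const.inner continuous_id)).aestronglyMeasurable
  have hdom : ∀ p : E, ∀ z, ‖(M z * exp ⟪p, z⟫) • z‖ ≤ ‖M z * (1 + ‖z‖) * exp ⟪p, z⟫‖ := by
    intro p z
    simp only [norm_smul, norm_mul, Real.norm_of_nonneg (exp_pos _).le,
      Real.norm_of_nonneg (by positivity : (0 : ℝ) ≤ 1 + ‖z‖)]
    nlinarith [mul_nonneg (norm_nonneg (M z)) (exp_pos ⟪p, z⟫).le]
  have hint : Integrable (fun z => (M z * exp ⟪p₀, z⟫) • z) μ :=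
    (hM p₀).norm.mono' ((hmeas p₀).smul aestronglyMeasurable_id) (ae_of_all _ (hdom p₀))
  obtain ⟨S, hS⟩ := exists_finset_exp_norm_le_sum_exp_inner (E := E)
  -- on the unit ball around `p₀`, `exp ⟪p, z⟫ ≤ exp (⟪p₀, z⟫ + ‖z‖)` is dominated by finitely many
  -- of the integrable functions of the hypothesis
  have hbound : ∀ z, ∀ p ∈ Metric.ball p₀ 1, ‖innerSL ℝ ((M z * exp ⟪p, z⟫) • z)‖ ≤
      ∑ v ∈ S, ‖M z * (1 + ‖z‖) * exp ⟪p₀ + v, z⟫‖ := by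
    intro z p hp
    have hinner : ⟪p, z⟫ ≤ ⟪p₀, z⟫ + ‖z‖ := by
      have hcs := real_inner_le_norm (p - p₀) z
      have hp1 : ‖p - p₀‖ ≤ 1 := (mem_ball_iff_norm.1 hp).le
      rw [inner_sub_left] at hcs
      nlinarith [norm_nonneg z]
    have hnorm : ∀ q, ‖M z * (1 + ‖z‖) * exp q‖ = ‖M z * (1 + ‖z‖)‖ * exp q := fun q => by
      rw [norm_mul, Real.norm_of_nonneg (exp_pos q).le]
    calc ‖innerSL ℝ ((M z * exp ⟪p, z⟫) • z)‖
        ≤ ‖M z * (1 + ‖z‖)‖ * exp ⟪p, z⟫ := by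
          rw [innerSL_apply_norm, ← hnorm]
          exact hdom p z
      _ ≤ ‖M z * (1 + ‖z‖)‖ * (exp ⟪p₀, z⟫ * ∑ v ∈ S, exp ⟪v, z⟫) := by
          gcongr
          calc exp ⟪p, z⟫ ≤ exp (⟪p₀, z⟫ + ‖z‖) := exp_le_exp.2 hinner
            _ ≤ exp ⟪p₀, z⟫ * ∑ v ∈ S, exp ⟪v, z⟫ := by rw [exp_add]; gcongr; exact hS z
      _ = ∑ v ∈ S, ‖M z * (1 + ‖z‖) * exp ⟪p₀ + v, z⟫‖ := by
          rw [Finset.mul_sum, Finset.mul_sum]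
          exact Finset.sum_congr rfl fun v _ => by rw [hnorm, inner_add_left, exp_add]
  rw [← (innerSL ℝ).integral_comp_comm hint]
  refine hasFDerivAt_integral_of_dominated_of_fderiv_le (Metric.ball_mem_nhds p₀ one_pos)
    (Filter.Eventually.of_forall hmeas) ((hM p₀).norm.mono' (hmeas p₀) (ae_of_all _ fun z => ?_))
    ((innerSL ℝ).continuous.comp_aestronglyMeasurable hint.aestronglyMeasurable)
    (ae_of_all _ hbound) (integrable_finsetSum _ fun v _ => (hM (p₀ + v)).norm)
    (ae_of_all _ fun z p _ => ?_)
  · rw [norm_mul, norm_mul (M z * _)]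
    gcongr
    rw [norm_mul, Real.norm_of_nonneg (by positivity : (0 : ℝ) ≤ 1 + ‖z‖)]
    exact le_mul_of_one_le_right (norm_nonneg _) (by simp)
  · have hlin : HasFDerivAt (fun p : E => ⟪p, z⟫) (innerSL ℝ z) p := by
      convert (innerSL ℝ z).hasFDerivAt using 1
      funext p
      rw [innerSL_apply_apply, real_inner_comm]
    exact ((hlin.exp).const_mul (M z)).congr_fderiv (by rw [map_smul, smul_smul])

end MomentGeneratingFunction

section PartialDerivatives

variable {E : Type*} [NormedAddCommGroup E] [NormedSpace ℝ E]

theorem fderiv_apply_eq_zero_of_eq_zero_on_graph {F : Type*} [NormedAddCommGroup F]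
    [NormedSpace ℝ F] {G : ℝ × E → F} {γ : ℝ → E} {γ' : E} {s : Set ℝ} {t : ℝ}
    (hG : DifferentiableAt ℝ G (t, γ t))
    (hγ : HasDerivWithinAt γ γ' s t) (hs : UniqueDiffWithinAt ℝ s t) (ht : t ∈ s)
    (h0 : ∀ τ ∈ s, G (τ, γ τ) = 0) : fderiv ℝ G (t, γ t) (1, γ') = 0 := by
  have hcomp : HasDerivWithinAt (fun τ => G (τ, γ τ)) (fderiv ℝ G (t, γ t) (1, γ')) s t :=
    hG.hasFDerivAt.comp_hasDerivWithinAt t ((hasDerivWithinAt_id t s).prodMk hγ)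
  have hconst : HasDerivWithinAt (fun τ => G (τ, γ τ)) 0 s t :=
    (hasDerivWithinAt_const t s 0).congr h0 (h0 t ht)
  exact hs.eq_deriv _ hcomp hconst

theorem hasFDerivAt_uncurry_right {U : ℝ → E → ℝ} {t : ℝ} {y : E}
    (hU : DifferentiableAt ℝ (uncurry U) (t, y)) :
    HasFDerivAt (U t) ((fderiv ℝ (uncurry U) (t, y)).comp (ContinuousLinearMap.inr ℝ ℝ E)) y :=
  hU.hasFDerivAt.comp y (hasFDerivAt_prodMk_right t y)

theorem hasDerivAt_uncurry_left {U : ℝ → E → ℝ} {t : ℝ} {y : E}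
    (hU : DifferentiableAt ℝ (uncurry U) (t, y)) :
    HasDerivAt (fun s => U s y) (fderiv ℝ (uncurry U) (t, y) (1, 0)) t := by
  have := hU.hasFDerivAt.comp_hasDerivAt t ((hasDerivAt_id t).prodMk (hasDerivAt_const t y))
  exact this

end PartialDerivatives

section PartialGradient

variable {E : Type*} [NormedAddCommGroup E] [InnerProductSpace ℝ E] [CompleteSpace E]

theorem fderiv_uncurry_apply {Λ : E → ℝ → ℝ} {y : E} {s : ℝ}
    (hΛ : DifferentiableAt ℝ (uncurry Λ) (y, s)) (v : E) (c : ℝ) :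
    fderiv ℝ (uncurry Λ) (y, s) (v, c) = ⟪gradient (fun y => Λ y s) y, v⟫ + c * deriv (Λ y) s := by
  have hleft : HasFDerivAt (fun y => Λ y s)
      ((fderiv ℝ (uncurry Λ) (y, s)).comp (ContinuousLinearMap.inl ℝ E ℝ)) y := by
    have := hΛ.hasFDerivAt.comp y (hasFDerivAt_prodMk_left (𝕜 := ℝ) y s)
    exact this
  have hright : HasDerivAt (Λ y) (fderiv ℝ (uncurry Λ) (y, s) (0, 1)) s := by
    have := hΛ.hasFDerivAt.comp_hasDerivAt s ((hasDerivAt_const s y).prodMk (hasDerivAt_id s))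
    exact this
  rw [inner_gradient_left, hleft.fderiv, hright.deriv,
    ← (fderiv ℝ (uncurry Λ) (y, s)).comp_inl_add_comp_inr]
  have hc : ((0 : E), c) = c • ((0 : E), (1 : ℝ)) := by simp
  simp only [ContinuousLinearMap.coe_comp, comp_apply, ContinuousLinearMap.inl_apply,
    ContinuousLinearMap.inr_apply, hc, map_smul, smul_eq_mul, mul_comm c]

theorem continuous_deriv_uncurry {Λ : E → ℝ → ℝ} (hΛ : ContDiff ℝ 1 (uncurry Λ)) (s : ℝ) :
    Continuous fun y => deriv (Λ y) s := by
  have h := fun y => fderiv_uncurry_apply (hΛ.differentiable one_ne_zero (y, s)) 0 1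
  simp only [inner_zero_right, zero_add, one_mul] at h
  simp only [← h]
  exact ((hΛ.continuous_fderiv one_ne_zero).comp (continuous_id.prodMk continuous_const)).clm_apply
    continuous_const

theorem ContDiff.continuous_gradient {f : E → ℝ} (hf : ContDiff ℝ 1 f) : Continuous (gradient f) :=
  (toDual ℝ E).symm.continuous.comp (hf.continuous_fderiv one_ne_zero)

/-- `∇_y U (t, y)`, as a function of `(t, y)`. -/
noncomputable def partialGradient (U : ℝ → E → ℝ) (q : ℝ × E) : E :=
  gradient (U q.1) q.2

variable {U : ℝ → E → ℝ}

theorem partialGradient_eq (hU : Differentiable ℝ (uncurry U)) :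
    partialGradient U = fun q =>
      (toDual ℝ E).symm ((fderiv ℝ (uncurry U) q).comp (ContinuousLinearMap.inr ℝ ℝ E)) := by
  funext q
  exact congrArg (toDual ℝ E).symm (hasFDerivAt_uncurry_right (hU q)).fderiv

theorem contDiff_partialGradient {m n : WithTop ℕ∞} (hU : ContDiff ℝ n (uncurry U))
    (hmn : m + 1 ≤ n) : ContDiff ℝ m (partialGradient U) := by
  rw [partialGradient_eq ((hU.of_le (le_add_self.trans hmn)).differentiable one_ne_zero)]
  exact (toDual ℝ E).symm.contDiff.comp ((hU.fderiv_right hmn).clm_comp contDiff_const)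

variable (hU : ContDiff ℝ 2 (uncurry U))
include hU

theorem hasFDerivAt_gradient_slice (t : ℝ) (y : E) :
    HasFDerivAt (gradient (U t))
      ((fderiv ℝ (partialGradient U) (t, y)).comp (ContinuousLinearMap.inr ℝ ℝ E)) y :=
  ((contDiff_partialGradient (m := 1) hU (by norm_num)).differentiable one_ne_zero
    (t, y)).hasFDerivAt.comp y (hasFDerivAt_prodMk_right t y)

theorem inner_fderiv_partialGradient (q h : ℝ × E) (w : E) :
    ⟪fderiv ℝ (partialGradient U) q h, w⟫ = fderiv ℝ (fderiv ℝ (uncurry U)) q h (0, w) := by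
  have hG := (contDiff_partialGradient (m := 1) hU (by norm_num)).differentiable one_ne_zero
  have hDU := (hU.fderiv_right (m := 1) (by norm_num)).differentiable one_ne_zero
  have hfun : (fun q => ⟪partialGradient U q, w⟫) = fun q => fderiv ℝ (uncurry U) q (0, w) := by
    funext q
    rw [partialGradient, inner_gradient_left,
      (hasFDerivAt_uncurry_right (hU.differentiable (by norm_num) q)).fderiv]
    rfl
  calc ⟪fderiv ℝ (partialGradient U) q h, w⟫
      = fderiv ℝ (fun q => ⟪partialGradient U q, w⟫) q h := by
        simp [fderiv_inner_apply ℝ (hG q) (differentiableAt_const w)]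
    _ = fderiv ℝ (fderiv ℝ (uncurry U)) q h (0, w) := by
        rw [hfun, fderiv_clm_apply (hDU q) (differentiableAt_const _)]
        simp

theorem isSymmetric_fderiv_gradient (t : ℝ) (y : E) :
    (fderiv ℝ (gradient (U t)) y : E →ₗ[ℝ] E).IsSymmetric := by
  intro v w
  have hsymm := hU.contDiffAt.isSymmSndFDerivAt (x := (t, y)) (by simp)
  simp only [ContinuousLinearMap.coe_coe, (hasFDerivAt_gradient_slice hU t y).fderiv,
    ContinuousLinearMap.coe_comp, comp_apply, ContinuousLinearMap.inr_apply]
  rw [inner_fderiv_partialGradient hU, real_inner_comm, inner_fderiv_partialGradient hU, hsymm]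

/-- Symmetry of mixed partial derivatives: `∇_y (∂_t U) = ∂_t (∇_y U)`. -/
theorem hasGradientAt_deriv_left (t : ℝ) (y : E) :
    HasGradientAt (fun y => deriv (fun s => U s y) t)
      (fderiv ℝ (partialGradient U) (t, y) (1, 0)) y := by
  have hsymm := hU.contDiffAt.isSymmSndFDerivAt (x := (t, y)) (by simp)
  have hDU := (hU.fderiv_right (m := 1) (by norm_num)).differentiable one_ne_zero
  have hfun : (fun y => deriv (fun s => U s y) t) = fun y => fderiv ℝ (uncurry U) (t, y) (1, 0) :=
    funext fun y => (hasDerivAt_uncurry_left (hU.differentiable (by norm_num) (t, y))).deriv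
  rw [hfun, hasGradientAt_iff_hasFDerivAt]
  refine (((hDU (t, y)).hasFDerivAt.comp y (hasFDerivAt_prodMk_right t y)).clm_apply
    (hasFDerivAt_const _ y)).congr_fderiv ?_
  ext v
  simpa [inner_fderiv_partialGradient hU] using hsymm (0, v) (1, 0)

theorem continuousOn_fderiv_gradient {γ : ℝ → E} {s : Set ℝ} (hγ : ContinuousOn γ s) :
    ContinuousOn (fun t => fderiv ℝ (gradient (U t)) (γ t)) s := by
  have hG := (contDiff_partialGradient (m := 1) hU (by norm_num)).continuous_fderiv one_ne_zero
  simp only [fun t => (hasFDerivAt_gradient_slice hU t (γ t)).fderiv]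
  exact (hG.comp_continuousOn (continuousOn_id.prodMk hγ)).clm_comp continuousOn_const

theorem continuousOn_ring_inverse_fderiv_gradient {γ : ℝ → E} {s : Set ℝ} (hγ : ContinuousOn γ s)
    (hA : ∀ t ∈ s, IsUnit (fderiv ℝ (gradient (U t)) (γ t))) :
    ContinuousOn (fun t => Ring.inverse (fderiv ℝ (gradient (U t)) (γ t))) s := fun t ht => by
  have hinv := NormedRing.inverse_continuousAt (hA t ht).unit
  rw [IsUnit.unit_spec] at hinv
  exact ContinuousAt.comp_continuousWithinAt (f := fun t => fderiv ℝ (gradient (U t)) (γ t)) hinv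
    (continuousOn_fderiv_gradient hU hγ t ht)

end PartialGradient

theorem inner_ring_inverse_apply_nonpos {E : Type*} [NormedAddCommGroup E]
    [InnerProductSpace ℝ E] {A : E →L[ℝ] E} (hA : ∀ v ≠ 0, ⟪A v, v⟫ < 0) (g : E) :
    ⟪g, Ring.inverse A g⟫ ≤ 0 := by
  by_cases hunit : IsUnit A
  · set w := Ring.inverse A g
    have hw : A w = g := by
      rw [← mul_apply_eq_comp, Ring.mul_inverse_cancel _ hunit, one_apply_eq_self]
    rw [← hw]
    rcases eq_or_ne w 0 with h | h
    · simp [h]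
    · exact (hA w h).le
  · simp [Ring.inverse_non_unit _ hunit]

section CanonicalEquation

variable {E : Type*} [NormedAddCommGroup E] [InnerProductSpace ℝ E] [FiniteDimensional ℝ E]
  [MeasurableSpace E] [BorelSpace E] {μ : Measure E} {M : E → ℝ} {Λ : E → ℝ → ℝ}

theorem hasGradientAt_comp_integral_mul_exp_inner {g : E → E} {A : E →L[ℝ] E} {y₀ : E}
    (hM : ∀ p : E, Integrable (fun z => M z * (1 + ‖z‖) * exp ⟪p, z⟫) μ)
    (hM1 : ∫ z, M z ∂μ = 1) (hΛ : DifferentiableAt ℝ (uncurry Λ) (y₀, 1))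
    (hg : HasFDerivAt g A y₀) (hA : (A : E →ₗ[ℝ] E).IsSymmetric) (hg0 : g y₀ = 0) :
    HasGradientAt (fun y => Λ y (∫ z, M z * exp ⟪g y, z⟫ ∂μ))
      (gradient (fun y => Λ y 1) y₀ + deriv (Λ y₀) 1 • A (∫ z, M z • z ∂μ)) y₀ := by
  have hη : HasFDerivAt (fun y => ∫ z, M z * exp ⟪g y, z⟫ ∂μ)
      ((innerSL ℝ (∫ z, M z • z ∂μ)).comp A) y₀ := by
    have := hasFDerivAt_integral_mul_exp_inner hM 0
    simp only [inner_zero_left, exp_zero, mul_one] at this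
    rw [← hg0] at this
    exact this.comp y₀ hg
  have hη1 : ∫ z, M z * exp ⟪g y₀, z⟫ ∂μ = 1 := by simpa [hg0] using hM1
  have hΛ' : DifferentiableAt ℝ (uncurry Λ) (y₀, ∫ z, M z * exp ⟪g y₀, z⟫ ∂μ) := hη1 ▸ hΛ
  have := hΛ'.hasFDerivAt.comp y₀ ((hasFDerivAt_id y₀).prodMk hη)
  rw [hasGradientAt_iff_hasFDerivAt]
  refine this.congr_fderiv ?_
  ext v
  have hAm : ⟪∫ z, M z • z ∂μ, A v⟫ = ⟪A (∫ z, M z • z ∂μ), v⟫ := (hA _ v).symm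
  simp [hη1, fderiv_uncurry_apply hΛ, hAm, mul_comm]

theorem canonical_equation {U : ℝ → E → ℝ} {γ : ℝ → E} {γ' : E} {s : Set ℝ} {t : ℝ}
    (hM : ∀ p : E, Integrable (fun z => M z * (1 + ‖z‖) * exp ⟪p, z⟫) μ)
    (hM1 : ∫ z, M z ∂μ = 1) (hΛ : DifferentiableAt ℝ (uncurry Λ) (γ t, 1))
    (hU : ContDiff ℝ 2 (uncurry U))
    (hHJ : ∀ y, deriv (fun s => U s y) t = -Λ y (∫ z, M z * exp ⟪gradient (U t) y, z⟫ ∂μ))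
    (hγ : HasDerivWithinAt γ γ' s t) (hs : UniqueDiffWithinAt ℝ s t) (ht : t ∈ s)
    (hcrit : ∀ τ ∈ s, gradient (U τ) (γ τ) = 0) (hA : IsUnit (fderiv ℝ (gradient (U t)) (γ t))) :
    γ' = Ring.inverse (fderiv ℝ (gradient (U t)) (γ t)) (gradient (fun y => Λ y 1) (γ t))
      + deriv (Λ (γ t)) 1 • ∫ z, M z • z ∂μ := by
  set A := fderiv ℝ (gradient (U t)) (γ t)
  set G := fderiv ℝ (partialGradient U) (t, γ t)
  set m := ∫ z, M z • z ∂μ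
  have hAG : A = G.comp (ContinuousLinearMap.inr ℝ ℝ E) :=
    (hasFDerivAt_gradient_slice hU t (γ t)).fderiv
  have hcurve : G (1, 0) + A γ' = 0 := by
    have hG := (contDiff_partialGradient (m := 1) hU (by norm_num)).differentiable one_ne_zero
    rw [hAG, ContinuousLinearMap.comp_apply, ContinuousLinearMap.inr_apply, ← map_add,
      Prod.mk_add_mk, add_zero, zero_add]
    exact fderiv_apply_eq_zero_of_eq_zero_on_graph (hG _) hγ hs ht hcrit
  -- the gradient of `y ↦ ∂_t U (t, y)` is `∂_t ∇_y U = -A γ'`, and the Hamilton–Jacobi equation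
  -- computes it in terms of `Λ`
  have hHam := hasGradientAt_iff_hasFDerivAt.1 (hasGradientAt_comp_integral_mul_exp_inner hM hM1 hΛ
    (hasFDerivAt_gradient_slice hU t (γ t)).differentiableAt.hasFDerivAt
    (isSymmetric_fderiv_gradient hU t (γ t)) (hcrit t ht))
  have hmixed := hasGradientAt_iff_hasFDerivAt.1 (hasGradientAt_deriv_left hU t (γ t))
  have hAγ' : A γ' = gradient (fun y => Λ y 1) (γ t) + deriv (Λ (γ t)) 1 • A m := by
    have := (toDual ℝ E).injective
      ((hmixed.unique (hHam.neg.congr_of_eventuallyEq (.of_forall hHJ))).trans (map_neg _ _).symm)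
    rw [eq_neg_of_add_eq_zero_left hcurve] at this
    exact neg_inj.1 this
  have hinvA : ∀ x, Ring.inverse A (A x) = x := fun x => by
    rw [← mul_apply_eq_comp, Ring.inverse_mul_cancel _ hA, one_apply_eq_self]
  calc γ' = Ring.inverse A (A γ') := (hinvA γ').symm
    _ = _ := by rw [hAγ', map_add, map_smul, hinvA]

end CanonicalEquation

theorem population_size_dynamics_general
    (n : ℕ) (T : ℝ) (hT : 0 < T)
    (Λ : EuclideanSpace ℝ (Fin n) → ℝ → ℝ)
    (hΛ : ContDiff ℝ 1 (fun p : EuclideanSpace ℝ (Fin n) × ℝ => Λ p.1 p.2))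
    (M : EuclideanSpace ℝ (Fin n) → ℝ)
    (hMprob : ∫ z, M z = 1)
    (hMexp : ∀ p : EuclideanSpace ℝ (Fin n),
      Integrable (fun z => M z * (1 + ‖z‖) * Real.exp ⟪p, z⟫))
    (U : ℝ → EuclideanSpace ℝ (Fin n) → ℝ)
    (hU : ContDiff ℝ 2 (fun q : ℝ × EuclideanSpace ℝ (Fin n) => U q.1 q.2))
    (η : ℝ → EuclideanSpace ℝ (Fin n) → ℝ)
    (hη : ∀ t y, η t y = ∫ z, M z * Real.exp ⟪gradient (U t) y, z⟫)
    (hHJ : ∀ t ∈ Icc (0:ℝ) T, ∀ y, deriv (fun s => U s y) t = -Λ y (η t y))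
    (ybar ybar' : ℝ → EuclideanSpace ℝ (Fin n))
    (hybar : ∀ t ∈ Icc (0:ℝ) T, HasDerivWithinAt ybar (ybar' t) (Icc 0 T) t)
    (hcrit : ∀ t ∈ Icc (0:ℝ) T, gradient (U t) (ybar t) = 0)
    (hinv : ∀ t ∈ Icc (0:ℝ) T,
      IsUnit (fderiv ℝ (fun y => gradient (U t) y) (ybar t)))
    (ρ : ℝ → ℝ)
    (hρ : ∀ t : ℝ, ρ t = deriv (fun s => U s (ybar t)) t) :
    (∀ t ∈ Icc (0:ℝ) T, ρ t = -Λ (ybar t) 1) ∧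
    ∃ ρ' : ℝ → ℝ, ContinuousOn ρ' (Icc 0 T) ∧
      (∀ t ∈ Icc (0:ℝ) T,
        HasDerivWithinAt ρ (ρ' t) (Icc 0 T) t ∧
        ρ' t =
          -⟪gradient (fun y => Λ y 1) (ybar t),
              (Ring.inverse (fderiv ℝ (fun y => gradient (U t) y) (ybar t)))
                (gradient (fun y => Λ y 1) (ybar t))⟫
          - deriv (Λ (ybar t)) 1 *
              ⟪∫ z, M z • z, gradient (fun y => Λ y 1) (ybar t)⟫) ∧
      (((∫ z, M z • z) = 0 ∧
          ∀ t ∈ Icc (0:ℝ) T, ∀ v : EuclideanSpace ℝ (Fin n), v ≠ 0 →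
            ⟪(fderiv ℝ (fun y => gradient (U t) y) (ybar t)) v, v⟫ < 0) →
        ∀ t ∈ Icc (0:ℝ) T, 0 ≤ ρ' t) := by
  have hΛ1 : ContDiff ℝ 1 (fun y => Λ y 1) := hΛ.comp (contDiff_id.prodMk contDiff_const)
  have hsize : ∀ t ∈ Icc (0:ℝ) T, ρ t = -Λ (ybar t) 1 := fun t ht => by
    rw [hρ, hHJ t ht, hη, hcrit t ht]
    simp [hMprob]
  have hcanon := fun t ht => canonical_equation hMexp hMprob (hΛ.differentiable one_ne_zero _) hU
    (fun y => (hHJ t ht y).trans (by rw [hη])) (hybar t ht) (uniqueDiffOn_Icc hT t ht) ht hcrit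
    (hinv t ht)
  have hybarc : ContinuousOn ybar (Icc 0 T) := fun t ht => (hybar t ht).continuousWithinAt
  have hgrad := hΛ1.continuous_gradient.comp_continuousOn hybarc
  refine ⟨hsize, _, ?_, fun t ht => ⟨?_, rfl⟩, ?_⟩
  · exact ((hgrad.inner ((continuousOn_ring_inverse_fderiv_gradient hU hybarc hinv).clm_apply
      hgrad)).neg).sub (((continuous_deriv_uncurry hΛ 1).comp_continuousOn hybarc).mul
      (continuousOn_const.inner hgrad))
  · have := ((hΛ1.differentiable one_ne_zero _).hasFDerivAt.comp_hasDerivWithinAt t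
      (hybar t ht)).neg.congr hsize (hsize t ht)
    refine this.congr_deriv ?_
    rw [← inner_gradient_left, hcanon t ht, inner_add_right, inner_smul_right,
      real_inner_comm (gradient _ _) (∫ z, M z • z)]
    ring
  · rintro ⟨hm, hneg⟩ t ht
    simp only [hm, inner_zero_left, mul_zero, sub_zero, neg_nonneg]
    exact inner_ring_inverse_apply_nonpos (hneg t ht) _

/-- the limiting population size `ρ(t) = ∂_tU(t,ȳ(t))`
satisfies `ρ(t) = −Λ(ȳ(t),1)`, is continuously differentiable with
`ρ' = −∇_yΛ·(D²_yU)⁻¹∇_yΛ − ∂_ηΛ·(∫Mz dz)·∇_yΛ`, and is nondecreasing when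
`M` is even and `D²_yU(t,ȳ(t))` is negative definite. -/
theorem population_size_dynamics
    (n : ℕ) (hn : 1 ≤ n) (T : ℝ) (hT : 0 < T)
    (Λ : EuclideanSpace ℝ (Fin n) → ℝ → ℝ)
    (hΛ : ContDiff ℝ 1 (fun p : EuclideanSpace ℝ (Fin n) × ℝ => Λ p.1 p.2))
    (M : EuclideanSpace ℝ (Fin n) → ℝ)
    (hMmeas : Measurable M) (hMnn : ∀ z, 0 ≤ M z)
    (hMprob : ∫ z, M z = 1)
    (hMexp : ∀ p : EuclideanSpace ℝ (Fin n),
      Integrable (fun z => M z * (1 + ‖z‖) * Real.exp ⟪p, z⟫))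
    (U : ℝ → EuclideanSpace ℝ (Fin n) → ℝ)
    (hU : ContDiff ℝ 2 (fun q : ℝ × EuclideanSpace ℝ (Fin n) => U q.1 q.2))
    (η : ℝ → EuclideanSpace ℝ (Fin n) → ℝ)
    (hη : ∀ t y, η t y = ∫ z, M z * Real.exp ⟪gradient (U t) y, z⟫)
    (hHJ : ∀ t ∈ Icc (0:ℝ) T, ∀ y, deriv (fun s => U s y) t = -Λ y (η t y))
    (ybar ybar' : ℝ → EuclideanSpace ℝ (Fin n))
    (hybar : ∀ t ∈ Icc (0:ℝ) T, HasDerivWithinAt ybar (ybar' t) (Icc 0 T) t)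
    (hybar'cont : ContinuousOn ybar' (Icc 0 T))
    (hcrit : ∀ t ∈ Icc (0:ℝ) T, gradient (U t) (ybar t) = 0)
    (hinv : ∀ t ∈ Icc (0:ℝ) T,
      IsUnit (fderiv ℝ (fun y => gradient (U t) y) (ybar t)))
    (ρ : ℝ → ℝ)
    (hρ : ∀ t : ℝ, ρ t = deriv (fun s => U s (ybar t)) t) :
    (∀ t ∈ Icc (0:ℝ) T, ρ t = -Λ (ybar t) 1) ∧
    ∃ ρ' : ℝ → ℝ, ContinuousOn ρ' (Icc 0 T) ∧
      (∀ t ∈ Icc (0:ℝ) T,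
        HasDerivWithinAt ρ (ρ' t) (Icc 0 T) t ∧
        ρ' t =
          -⟪gradient (fun y => Λ y 1) (ybar t),
              (Ring.inverse (fderiv ℝ (fun y => gradient (U t) y) (ybar t)))
                (gradient (fun y => Λ y 1) (ybar t))⟫
          - deriv (Λ (ybar t)) 1 *
              ⟪∫ z, M z • z, gradient (fun y => Λ y 1) (ybar t)⟫) ∧
      (((∫ z, M z • z) = 0 ∧
          ∀ t ∈ Icc (0:ℝ) T, ∀ v : EuclideanSpace ℝ (Fin n), v ≠ 0 →
            ⟪(fderiv ℝ (fun y => gradient (U t) y) (ybar t)) v, v⟫ < 0) →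
        ∀ t ∈ Icc (0:ℝ) T, 0 ≤ ρ' t) :=
  population_size_dynamics_general n T hT Λ hΛ M hMprob hMexp U hU η hη hHJ ybar ybar' hybar hcrit
    hinv ρ hρ
end
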